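/- arXiv:2408.00010 — 6 statements merged into one kernel-verified Lean document; each statement's English description precedes it below -/
import Mathlib

section
/- Let α, q, s > 0 with q + 1 = s(1+α), and let r₀ > 0. Then there exist h₀ ∈ (0,1) and constants 0 < c ≤ C (depending only on α, q, s, r₀) such that for every h ∈ (0,h₀), c · |log h| ≤ ∫₀^{r₀} r^q/(h+r^{1+α})^s dr ≤ C · |log h|. -/
open MeasureTheory Set

/-- For `α, q, s > 0` with `q + 1 = s(1+α)` and `r₀ > 0`, there are `h₀ ∈ (0,1)`
and constants `0 < c ≤ C` such that for every `h ∈ (0,h₀)`,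
`c·|log h| ≤ ∫₀^{r₀} r^q/(h+r^{1+α})^s dr ≤ C·|log h|`. -/
theorem stmt_2 (α q s r₀ : ℝ) (hα : 0 < α) (hq : 0 < q) (hs : 0 < s)
    (hr₀ : 0 < r₀) (hqs : q + 1 = s * (1 + α)) :
    ∃ h₀ ∈ Set.Ioo (0:ℝ) 1, ∃ c C : ℝ, 0 < c ∧ c ≤ C ∧ ∀ h ∈ Set.Ioo (0:ℝ) h₀,
      c * |Real.log h|
          ≤ (∫ r in Set.Ioo (0:ℝ) r₀, r ^ q / (h + r ^ (1 + α)) ^ s) ∧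
      (∫ r in Set.Ioo (0:ℝ) r₀, r ^ q / (h + r ^ (1 + α)) ^ s)
          ≤ C * |Real.log h| := by
  have hα1 : (0:ℝ) < 1 + α := by linarith
  have hq1 : (0:ℝ) < q + 1 := by linarith
  have hlog2 : (0:ℝ) < Real.log 2 := Real.log_pos (by norm_num)
  have h2s : (0:ℝ) < (2:ℝ) ^ (-s) := Real.rpow_pos_of_pos (by norm_num) _
  refine ⟨min (1/2) (r₀ ^ (2*(1+α))), ⟨by positivity,
      lt_of_le_of_lt (min_le_left _ _) (by norm_num)⟩,
    (2:ℝ)^(-s)/(2*(1+α)), (1/(q+1) + |Real.log r₀|)/Real.log 2 + 1/(1+α),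
    by positivity, ?_, ?_⟩
  · -- c ≤ C
    have h1 : (2:ℝ)^(-s) ≤ 1 :=
      Real.rpow_le_one_of_one_le_of_nonpos (by norm_num) (by linarith)
    have h2 : (0:ℝ) ≤ (1/(q+1) + |Real.log r₀|)/Real.log 2 := by positivity
    have h3 : (2:ℝ)^(-s)/(2*(1+α)) ≤ 1/(1+α) := by
      rw [div_le_div_iff₀ (by positivity) (by positivity)]
      nlinarith
    linarith
  rintro h ⟨hh0, hhlt⟩
  have hh_half : h < 1/2 := lt_of_lt_of_le hhlt (min_le_left _ _)
  have hh_r : h < r₀ ^ (2*(1+α)) := lt_of_lt_of_le hhlt (min_le_right _ _)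
  have hh1 : h < 1 := by linarith
  have hhr1 : h < r₀ ^ (1+α) := by
    rcases le_or_gt r₀ 1 with hr|hr
    · calc h < r₀ ^ (2*(1+α)) := hh_r
        _ ≤ r₀ ^ (1+α) := Real.rpow_le_rpow_of_exponent_ge hr₀ hr (by nlinarith)
    · calc h < 1/2 := hh_half
        _ ≤ 1 := by norm_num
        _ = (1:ℝ) ^ (1+α) := (Real.one_rpow _).symm
        _ ≤ r₀ ^ (1+α) := Real.rpow_le_rpow (by norm_num) hr.le hα1.le
  set ρ : ℝ := h ^ ((1:ℝ)/(1+α)) with hρdef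
  have hρ0 : 0 < ρ := Real.rpow_pos_of_pos hh0 _
  have hρpow : ρ ^ (1+α) = h := by
    rw [hρdef, ← Real.rpow_mul hh0.le, one_div_mul_cancel hα1.ne', Real.rpow_one]
  have hρr : ρ < r₀ := by
    have h1 : ρ < (r₀ ^ (1+α)) ^ ((1:ℝ)/(1+α)) :=
      Real.rpow_lt_rpow hh0.le hhr1 (by positivity)
    rwa [← Real.rpow_mul hr₀.le, mul_one_div_cancel hα1.ne', Real.rpow_one] at h1
  have hρq1 : ρ ^ (q+1) = h ^ s := by
    rw [hρdef, ← Real.rpow_mul hh0.le]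
    congr 1
    field_simp
    linarith
  have hlogρ : Real.log ρ = Real.log h / (1+α) := by
    rw [hρdef, Real.log_rpow hh0]
    ring
  set f : ℝ → ℝ := fun r => r ^ q / (h + r ^ (1 + α)) ^ s with hfdef
  -- continuity of f on Ioi 0
  have hcont : ContinuousOn f (Ioi 0) := by
    apply ContinuousOn.div
    · exact continuousOn_id.rpow_const (fun x _ => Or.inr hq.le)
    · exact (continuousOn_const.add
        (continuousOn_id.rpow_const (fun x _ => Or.inr hα1.le))).rpow_const
        (fun x _ => Or.inr hs.le)
    · intro x hx
      have hx0 : (0:ℝ) < x := hx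
      have hxp : 0 < x ^ (1+α) := Real.rpow_pos_of_pos hx0 _
      have hd : 0 < h + x ^ (1+α) := by linarith
      exact (Real.rpow_pos_of_pos hd s).ne'
  -- integrability of r^q on Ioo 0 r₀
  have hIrq : IntegrableOn (fun r : ℝ => r ^ q) (Ioo 0 r₀) := by
    have h1 := intervalIntegral.intervalIntegrable_rpow' (a:=0) (b:=r₀)
      (by linarith : (-1:ℝ) < q)
    rw [intervalIntegrable_iff, uIoc_of_le hr₀.le] at h1
    exact h1.mono_set Ioo_subset_Ioc_self
  -- integrability of f on Ioo 0 r₀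
  have hf_int : IntegrableOn f (Ioo 0 r₀) := by
    apply Integrable.mono' (g := fun r => r ^ q / h ^ s) (hIrq.div_const _)
    · exact (hcont.mono (fun x hx => hx.1)).aestronglyMeasurable measurableSet_Ioo
    · rw [ae_restrict_iff' measurableSet_Ioo]
      filter_upwards with x hx
      have hx0 : 0 < x := hx.1
      have hxp : 0 < x ^ (1+α) := Real.rpow_pos_of_pos hx0 _
      have hd : 0 < h + x ^ (1+α) := by linarith
      have hfx : 0 ≤ f x := by
        rw [hfdef]
        positivity
      rw [Real.norm_eq_abs, abs_of_nonneg hfx, hfdef]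
      apply div_le_div_of_nonneg_left (by positivity) (Real.rpow_pos_of_pos hh0 s)
      exact Real.rpow_le_rpow hh0.le (by linarith) hs.le
  have hsubIoc : Ioc 0 ρ ⊆ Ioo 0 r₀ := fun x hx => ⟨hx.1, lt_of_le_of_lt hx.2 hρr⟩
  have hsubIoo : Ioo ρ r₀ ⊆ Ioo 0 r₀ := fun x hx => ⟨lt_trans hρ0 hx.1, hx.2⟩
  -- integrability of r⁻¹ on Ioo ρ r₀
  have hIinv : IntegrableOn (fun r : ℝ => r⁻¹) (Ioo ρ r₀) := by
    have : ContinuousOn (fun r : ℝ => r⁻¹) (Icc ρ r₀) := by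
      apply ContinuousOn.inv₀ continuousOn_id
      intro x hx
      exact (lt_of_lt_of_le hρ0 hx.1).ne'
    exact this.integrableOn_Icc.mono_set Ioo_subset_Icc_self
  -- integral computations
  have hI1 : ∫ r in Ioo ρ r₀, r⁻¹ = Real.log r₀ - Real.log ρ := by
    rw [← integral_Ioc_eq_integral_Ioo, ← intervalIntegral.integral_of_le hρr.le,
      integral_inv (by rw [uIcc_of_le hρr.le]; exact fun hc => absurd hc.1 (not_le.mpr hρ0)),
      Real.log_div hr₀.ne' hρ0.ne']
  have hI2 : ∫ r in Ioc 0 ρ, r ^ q = h ^ s / (q+1) := by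
    rw [← intervalIntegral.integral_of_le hρ0.le, integral_rpow (Or.inl (by linarith)),
      Real.zero_rpow hq1.ne', sub_zero, hρq1]
  -- splitting
  have hdisj : Disjoint (Ioc (0:ℝ) ρ) (Ioo ρ r₀) := by
    rw [Set.disjoint_left]
    rintro x ⟨_, hx2⟩ ⟨hx3, _⟩
    linarith
  have hsplit : (∫ r in Ioo (0:ℝ) r₀, f r)
      = (∫ r in Ioc 0 ρ, f r) + ∫ r in Ioo ρ r₀, f r := by
    rw [← Ioc_union_Ioo_eq_Ioo hρ0.le hρr,
      setIntegral_union hdisj measurableSet_Ioo (hf_int.mono_set hsubIoc)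
        (hf_int.mono_set hsubIoo)]
  -- pointwise lower bound on Ioo ρ r₀
  have hptlow : ∀ x ∈ Ioo ρ r₀, (2:ℝ)^(-s) * x⁻¹ ≤ f x := by
    intro x hx
    have hx0 : 0 < x := lt_trans hρ0 hx.1
    have hxp : 0 < x ^ (1+α) := Real.rpow_pos_of_pos hx0 _
    have hhx : h ≤ x ^ (1+α) := by
      rw [← hρpow]
      exact Real.rpow_le_rpow hρ0.le hx.1.le hα1.le
    have hden : (h + x ^ (1+α)) ^ s ≤ 2 ^ s * x ^ (q+1) := by
      calc (h + x ^ (1+α)) ^ s ≤ (2 * x ^ (1+α)) ^ s :=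
            Real.rpow_le_rpow (by linarith) (by linarith) hs.le
        _ = 2 ^ s * (x ^ (1+α)) ^ s := Real.mul_rpow (by norm_num) hxp.le
        _ = 2 ^ s * x ^ ((1+α)*s) := by rw [← Real.rpow_mul hx0.le]
        _ = 2 ^ s * x ^ (q+1) := by rw [show (1+α)*s = q+1 by linarith]
    have hxq : 0 < x ^ q := Real.rpow_pos_of_pos hx0 q
    have hq1x : 0 < x ^ (q+1) := Real.rpow_pos_of_pos hx0 _
    have h2sp : (0:ℝ) < (2:ℝ) ^ s := Real.rpow_pos_of_pos (by norm_num) _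
    have key : x ^ q / (2 ^ s * x ^ (q+1)) ≤ f x := by
      rw [hfdef]
      exact div_le_div_of_nonneg_left hxq.le
        (Real.rpow_pos_of_pos (by linarith) s) hden
    have heq : x ^ q / ((2:ℝ) ^ s * x ^ (q+1)) = (2:ℝ)^(-s) * x⁻¹ := by
      rw [Real.rpow_add hx0, Real.rpow_one, Real.rpow_neg (by norm_num : (0:ℝ) ≤ 2)]
      field_simp
    linarith [key, heq ▸ key]
  -- pointwise upper bounds
  have hptup1 : ∀ x ∈ Ioc (0:ℝ) ρ, f x ≤ x ^ q / h ^ s := by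
    intro x hx
    have hx0 : 0 < x := hx.1
    have hxp : 0 < x ^ (1+α) := Real.rpow_pos_of_pos hx0 _
    rw [hfdef]
    apply div_le_div_of_nonneg_left (Real.rpow_pos_of_pos hx0 q).le
      (Real.rpow_pos_of_pos hh0 s)
    exact Real.rpow_le_rpow hh0.le (by linarith) hs.le
  have hptup2 : ∀ x ∈ Ioo ρ r₀, f x ≤ x⁻¹ := by
    intro x hx
    have hx0 : 0 < x := lt_trans hρ0 hx.1
    have hxp : 0 < x ^ (1+α) := Real.rpow_pos_of_pos hx0 _
    have h1 : f x ≤ x ^ q / (x ^ (1+α)) ^ s := by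
      rw [hfdef]
      exact div_le_div_of_nonneg_left (Real.rpow_pos_of_pos hx0 q).le
        (Real.rpow_pos_of_pos hxp s) (Real.rpow_le_rpow hxp.le (by linarith) hs.le)
    have h2 : x ^ q / (x ^ (1+α)) ^ s = x⁻¹ := by
      rw [← Real.rpow_mul hx0.le, show (1+α)*s = q+1 by linarith,
        Real.rpow_add hx0, Real.rpow_one]
      exact div_mul_cancel_left₀ (Real.rpow_pos_of_pos hx0 q).ne' x
    linarith
  -- integral bounds
  have hlow1 : (∫ r in Ioo ρ r₀, (2:ℝ)^(-s) * r⁻¹) ≤ ∫ r in Ioo ρ r₀, f r :=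
    setIntegral_mono_on (hIinv.const_mul _) (hf_int.mono_set hsubIoo)
      measurableSet_Ioo hptlow
  have hfnonneg : 0 ≤ᶠ[ae (volume.restrict (Ioo (0:ℝ) r₀))] f := by
    rw [Filter.EventuallyLE, ae_restrict_iff' measurableSet_Ioo]
    filter_upwards with x hx
    have hx0 : 0 < x := hx.1
    have hxp : 0 < x ^ (1+α) := Real.rpow_pos_of_pos hx0 _
    have hd : 0 < h + x ^ (1+α) := by linarith
    simp only [Pi.zero_apply, hfdef]
    positivity
  have hlow2 : (∫ r in Ioo ρ r₀, f r) ≤ ∫ r in Ioo (0:ℝ) r₀, f r :=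
    setIntegral_mono_set hf_int hfnonneg hsubIoo.eventuallyLE
  have hconst : (∫ r in Ioo ρ r₀, (2:ℝ)^(-s) * r⁻¹)
      = (2:ℝ)^(-s) * (Real.log r₀ - Real.log ρ) := by
    rw [integral_const_mul, hI1]
  have hup1 : (∫ r in Ioc 0 ρ, f r) ≤ 1/(q+1) := by
    have h1 : (∫ r in Ioc 0 ρ, f r) ≤ ∫ r in Ioc 0 ρ, r ^ q / h ^ s :=
      setIntegral_mono_on (hf_int.mono_set hsubIoc)
        ((hIrq.mono_set (fun x hx => hsubIoc hx)).div_const _) measurableSet_Ioc hptup1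
    have h2 : (∫ r in Ioc (0:ℝ) ρ, r ^ q / h ^ s) = 1/(q+1) := by
      rw [integral_div, hI2]
      have hhs : h ^ s ≠ 0 := (Real.rpow_pos_of_pos hh0 s).ne'
      field_simp
    linarith
  have hup2 : (∫ r in Ioo ρ r₀, f r) ≤ Real.log r₀ - Real.log ρ := by
    have h1 : (∫ r in Ioo ρ r₀, f r) ≤ ∫ r in Ioo ρ r₀, r⁻¹ :=
      setIntegral_mono_on (hf_int.mono_set hsubIoo) hIinv measurableSet_Ioo hptup2
    linarith [hI1]
  -- final arithmetic
  have hloghneg : Real.log h < 0 := Real.log_neg hh0 hh1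
  have habs : |Real.log h| = -Real.log h := abs_of_neg hloghneg
  have hlogh2 : Real.log h < 2*(1+α) * Real.log r₀ := by
    have := Real.log_lt_log hh0 hh_r
    rwa [Real.log_rpow hr₀] at this
  have hKA : Real.log h / (2*(1+α)) ≤ Real.log r₀ := by
    rw [div_le_iff₀ (by positivity)]
    nlinarith
  constructor
  · -- lower bound
    have e : Real.log h/(2*(1+α)) - Real.log h/(1+α) = -Real.log h/(2*(1+α)) := by
      field_simp
      ring
    have hgeo : -Real.log h/(2*(1+α)) ≤ Real.log r₀ - Real.log ρ := by
      rw [hlogρ]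
      linarith
    have hmul : (2:ℝ)^(-s) * (-Real.log h/(2*(1+α)))
        ≤ (2:ℝ)^(-s) * (Real.log r₀ - Real.log ρ) :=
      mul_le_mul_of_nonneg_left hgeo h2s.le
    have heqc : (2:ℝ)^(-s)/(2*(1+α)) * |Real.log h|
        = (2:ℝ)^(-s) * (-Real.log h/(2*(1+α))) := by
      rw [habs]; ring
    calc (2:ℝ)^(-s)/(2*(1+α)) * |Real.log h|
        = (2:ℝ)^(-s) * (-Real.log h/(2*(1+α))) := heqc
      _ ≤ (2:ℝ)^(-s) * (Real.log r₀ - Real.log ρ) := hmul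
      _ = ∫ r in Ioo ρ r₀, (2:ℝ)^(-s) * r⁻¹ := hconst.symm
      _ ≤ ∫ r in Ioo ρ r₀, f r := hlow1
      _ ≤ ∫ r in Ioo (0:ℝ) r₀, f r := hlow2
  · -- upper bound
    have hK2 : Real.log 2 < -Real.log h := by
      have := Real.log_lt_log hh0 hh_half
      rw [show (1:ℝ)/2 = 2⁻¹ by norm_num, Real.log_inv] at this
      linarith
    set B : ℝ := 1/(q+1) + |Real.log r₀| with hBdef
    have hBnn : 0 ≤ B := by positivity
    have hBe : B / Real.log 2 * Real.log 2 = B := div_mul_cancel₀ _ hlog2.ne'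
    have hBle : B ≤ B / Real.log 2 * (-Real.log h) := by
      have := mul_le_mul_of_nonneg_left hK2.le (by positivity : (0:ℝ) ≤ B / Real.log 2)
      linarith
    have hRle : Real.log r₀ ≤ |Real.log r₀| := le_abs_self _
    have hint : (∫ r in Ioo (0:ℝ) r₀, f r)
        ≤ 1/(q+1) + (Real.log r₀ - Real.log ρ) := by
      rw [hsplit]; linarith
    have hlogρ' : -Real.log ρ = (-Real.log h) * (1/(1+α)) := by
      rw [hlogρ]; ring
    calc (∫ r in Ioo (0:ℝ) r₀, f r)
        ≤ 1/(q+1) + (Real.log r₀ - Real.log ρ) := hint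
      _ ≤ B + (-Real.log h) * (1/(1+α)) := by rw [hBdef, ← hlogρ']; linarith
      _ ≤ B / Real.log 2 * (-Real.log h) + (-Real.log h) * (1/(1+α)) := by linarith
      _ = (B / Real.log 2 + 1/(1+α)) * |Real.log h| := by rw [habs]; ring
end

section
/- Let T > 0, 0 ≤ β < 1, 1 < q < ∞, and let g : [0,T] → [0,∞) be measurable with g ∈ L^q(0,T). Let h : [0,T] → [0,∞) be absolutely continuous with |h′(t)| ≤ g(t) · h(t)^β for almost every t ∈ [0,T]. If h(T*) = 0 for some T* ∈ [0,T], then lim_{t → T*} h(t) · |t − T*|^{−η} = 0, where η = ((q−1)/q) · 1/(1−β). -/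
/-!
Let `M = h c` be the maximum of `h` between `T*` and `t`. Since `h T* = 0`,
`M = |∫_{T*}^c h'| ≤ M^β ∫_{T*}^t g`, and Hölder bounds `∫_{T*}^t g` by
`‖g‖_{L^q(T*,t)} |t - T*|^{1 - 1/q}`. Dividing by `M^β` gives
`h t ≤ M ≤ (‖g‖_{L^q(T*,t)} |t - T*|^{1 - 1/q})^{1/(1-β)}`, that is
`h t |t - T*|^{-η} ≤ ‖g‖_{L^q(T*,t)}^{1/(1-β)}`, and the right-hand side tends to `0` by absolute
continuity of the integral of `g^q`.
-/

open MeasureTheory Filter Set Topology Interval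

theorem le_rpow_inv_one_sub_of_le_mul_rpow {x A β : ℝ} (hβ1 : β < 1) (hx : 0 ≤ x) (hA : 0 ≤ A)
    (hxA : x ≤ A * x ^ β) : x ≤ A ^ (1 - β)⁻¹ := by
  rcases hx.eq_or_lt with rfl | hx
  · positivity
  have hpow : x ^ (1 - β) ≤ A := by
    rw [Real.rpow_sub hx, Real.rpow_one, div_le_iff₀ (by positivity)]
    exact hxA
  calc x = (x ^ (1 - β)) ^ (1 - β)⁻¹ := by
        rw [← Real.rpow_mul hx.le, mul_inv_cancel₀ (by linarith), Real.rpow_one]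
    _ ≤ A ^ (1 - β)⁻¹ := by gcongr

theorem memLp_ofReal_of_integrable_rpow {α : Type*} [MeasurableSpace α] {μ : Measure α}
    {f : α → ℝ} {q : ℝ} (hq : 0 < q) (hf0 : 0 ≤ᵐ[μ] f) (hf : AEStronglyMeasurable f μ)
    (hfq : Integrable (fun x => f x ^ q) μ) : MemLp f (ENNReal.ofReal q) μ := by
  rw [← integrable_norm_rpow_iff hf (by simpa using hq) ENNReal.ofReal_ne_top,
    ENNReal.toReal_ofReal hq.le]
  refine hfq.congr ?_
  filter_upwards [hf0] with x hx
  rw [Real.norm_of_nonneg hx]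

theorem integral_le_integral_rpow_mul_measureReal_univ_rpow {α : Type*} [MeasurableSpace α]
    {μ : Measure α} [IsFiniteMeasure μ] {f : α → ℝ} {q : ℝ} (hq : 1 < q) (hf0 : 0 ≤ᵐ[μ] f)
    (hf : MemLp f (ENNReal.ofReal q) μ) :
    ∫ x, f x ∂μ ≤ (∫ x, f x ^ q ∂μ) ^ q⁻¹ * μ.real univ ^ (1 - q⁻¹) := by
  have holder := integral_mul_le_Lp_mul_Lq_of_nonneg (Real.HolderConjugate.conjExponent hq).symm
    (ae_of_all _ fun _ => zero_le_one) hf0 (memLp_const 1) hf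
  have hexp : (q.conjExponent)⁻¹ = 1 - q⁻¹ := by rw [Real.conjExponent]; field_simp
  simp only [one_mul, Real.one_rpow, integral_const, smul_eq_mul, mul_one, one_div, hexp]
    at holder
  rwa [mul_comm] at holder

theorem le_setIntegral_uIoc_rpow_of_abs_le_mul_rpow {β a b : ℝ} {g h h' : ℝ → ℝ}
    (hβ0 : 0 ≤ β) (hβ1 : β < 1) (hcont : ContinuousOn h (uIcc a b))
    (hh0 : ∀ s ∈ uIcc a b, 0 ≤ h s) (hrep : ∀ s ∈ uIcc a b, h s = ∫ x in a..s, h' x)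
    (hg0 : ∀ s ∈ Ι a b, 0 ≤ g s) (hg : IntegrableOn g (Ι a b))
    (hode : ∀ᵐ s, s ∈ Ι a b → |h' s| ≤ g s * h s ^ β) :
    h b ≤ (∫ s in Ι a b, g s) ^ (1 - β)⁻¹ := by
  obtain ⟨c, hc, hmax⟩ := isCompact_uIcc.exists_isMaxOn nonempty_uIcc hcont
  have hc0 : 0 ≤ h c := hh0 c hc
  have hsub : Ι a c ⊆ Ι a b := uIoc_union_uIoc hc ▸ subset_union_left
  have hbound : ∀ᵐ s ∂volume.restrict (Ι a c), ‖h' s‖ ≤ g s * h c ^ β := by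
    rw [ae_restrict_iff' measurableSet_uIoc]
    filter_upwards [hode] with s hs hsc
    have hsb := uIoc_subset_uIcc (hsub hsc)
    calc ‖h' s‖ ≤ g s * h s ^ β := hs (hsub hsc)
      _ ≤ g s * h c ^ β := by
        gcongr
        · exact hg0 s (hsub hsc)
        · exact hh0 s hsb
        · exact hmax hsb
  have hkey : h c ≤ (∫ s in Ι a b, g s) * h c ^ β :=
    calc h c = ‖∫ x in a..c, h' x‖ := by rw [← hrep c hc, Real.norm_of_nonneg hc0]
      _ = ‖∫ x in Ι a c, h' x‖ := intervalIntegral.norm_integral_eq_norm_integral_uIoc h'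
      _ ≤ ∫ x in Ι a c, g x * h c ^ β :=
        norm_integral_le_of_norm_le ((hg.mono_set hsub).mul_const _) hbound
      _ = (∫ x in Ι a c, g x) * h c ^ β := integral_mul_const _ _
      _ ≤ (∫ x in Ι a b, g x) * h c ^ β := by
        refine mul_le_mul_of_nonneg_right ?_ (Real.rpow_nonneg hc0 β)
        exact setIntegral_mono_set hg ((ae_restrict_iff' measurableSet_uIoc).2 (ae_of_all _ hg0))
          hsub.eventuallyLE
  exact (hmax right_mem_uIcc).trans (le_rpow_inv_one_sub_of_le_mul_rpow hβ1 hc0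
    (setIntegral_nonneg measurableSet_uIoc hg0) hkey)

theorem mul_abs_sub_rpow_le_setIntegral_uIoc_rpow_of_abs_le_mul_rpow {β q a b : ℝ}
    {g h h' : ℝ → ℝ} (hβ0 : 0 ≤ β) (hβ1 : β < 1) (hq : 1 < q) (hab : a ≠ b)
    (hcont : ContinuousOn h (uIcc a b)) (hh0 : ∀ s ∈ uIcc a b, 0 ≤ h s)
    (hrep : ∀ s ∈ uIcc a b, h s = ∫ x in a..s, h' x)
    (hg0 : ∀ s ∈ Ι a b, 0 ≤ g s) (hg : AEStronglyMeasurable g (volume.restrict (Ι a b)))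
    (hgq : IntegrableOn (fun s => g s ^ q) (Ι a b))
    (hode : ∀ᵐ s, s ∈ Ι a b → |h' s| ≤ g s * h s ^ β) :
    h b * |b - a| ^ (-((1 - q⁻¹) * (1 - β)⁻¹)) ≤
      (∫ s in Ι a b, g s ^ q) ^ (q⁻¹ * (1 - β)⁻¹) := by
  have : IsFiniteMeasure (volume.restrict (Ι a b)) :=
    isFiniteMeasure_restrict.2 (by simp [Real.volume_uIoc])
  have hg0' : 0 ≤ᵐ[volume.restrict (Ι a b)] g :=
    (ae_restrict_iff' measurableSet_uIoc).2 (ae_of_all _ hg0)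
  have hgLq := memLp_ofReal_of_integrable_rpow (by linarith) hg0' hg hgq
  have holder := integral_le_integral_rpow_mul_measureReal_univ_rpow hq hg0' hgLq
  rw [Measure.real, Measure.restrict_apply_univ, Real.volume_uIoc,
    ENNReal.toReal_ofReal (abs_nonneg _)] at holder
  have hJ0 : 0 ≤ ∫ s in Ι a b, g s ^ q :=
    setIntegral_nonneg measurableSet_uIoc fun s hs => Real.rpow_nonneg (hg0 s hs) q
  have hD : 0 < |b - a| := abs_pos.2 (sub_ne_zero.2 hab.symm)
  calc h b * |b - a| ^ (-((1 - q⁻¹) * (1 - β)⁻¹))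
      ≤ (∫ s in Ι a b, g s) ^ (1 - β)⁻¹ * |b - a| ^ (-((1 - q⁻¹) * (1 - β)⁻¹)) := by
        gcongr
        exact le_setIntegral_uIoc_rpow_of_abs_le_mul_rpow hβ0 hβ1 hcont hh0 hrep hg0
          (hgLq.integrable (by simpa using hq.le)) hode
    _ ≤ ((∫ s in Ι a b, g s ^ q) ^ q⁻¹ * |b - a| ^ (1 - q⁻¹)) ^ (1 - β)⁻¹ *
          |b - a| ^ (-((1 - q⁻¹) * (1 - β)⁻¹)) := by
        gcongr
        exact setIntegral_nonneg measurableSet_uIoc hg0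
    _ = (∫ s in Ι a b, g s ^ q) ^ (q⁻¹ * (1 - β)⁻¹) := by
        rw [Real.mul_rpow (by positivity) (by positivity), ← Real.rpow_mul hJ0,
          ← Real.rpow_mul hD.le, mul_assoc, ← Real.rpow_add hD, add_neg_cancel, Real.rpow_zero,
          mul_one]

theorem continuousOn_of_eq_add_primitive {a b : ℝ} {h h' : ℝ → ℝ} (hab : a ≤ b)
    (hh' : IntegrableOn h' (Icc a b)) (hac : ∀ t ∈ Icc a b, h t = h a + ∫ s in a..t, h' s) :
    ContinuousOn h (Icc a b) := by
  rw [← uIcc_of_le hab] at hh' ⊢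
  exact (continuousOn_const.add (intervalIntegral.continuousOn_primitive_interval hh')).congr
    fun t ht => hac t (uIcc_of_le hab ▸ ht)

theorem eq_add_integral_of_eq_add_primitive {a b u t : ℝ} {h h' : ℝ → ℝ} (hab : a ≤ b)
    (hh' : IntegrableOn h' (Icc a b)) (hac : ∀ t ∈ Icc a b, h t = h a + ∫ s in a..t, h' s)
    (hu : u ∈ Icc a b) (ht : t ∈ Icc a b) : h t = h u + ∫ s in u..t, h' s := by
  have hint : ∀ v ∈ Icc a b, IntervalIntegrable h' volume a v := fun v hv =>
    (hh'.mono_set (uIcc_subset_Icc (left_mem_Icc.2 hab) hv)).intervalIntegrable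
  rw [← intervalIntegral.integral_interval_sub_left (hint t ht) (hint u hu)]
  linarith [hac t ht, hac u hu]

theorem tendsto_setIntegral_uIoc_nhdsWithin {E : Type*} [NormedAddCommGroup E] [NormedSpace ℝ E]
    {f : ℝ → E} {s : Set ℝ} [hs : OrdConnected s] (hf : IntegrableOn f s) {a : ℝ} (ha : a ∈ s) :
    Tendsto (fun t => ∫ x in Ι a t, f x) (𝓝[s] a) (𝓝 0) := by
  have hvol : Tendsto (fun t => volume.restrict s (Ι a t)) (𝓝[s] a) (𝓝 0) := by
    refine tendsto_of_tendsto_of_tendsto_of_le_of_le tendsto_const_nhds ?_ (fun _ => zero_le)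
      (fun t => Measure.restrict_apply_le _ _)
    have : Tendsto (fun t => |t - a|) (𝓝[s] a) (𝓝 0) := by
      simpa using ((continuous_id.sub (continuous_const (y := a))).abs.tendsto a).mono_left
        nhdsWithin_le_nhds
    simpa [Real.volume_uIoc] using (ENNReal.tendsto_ofReal this)
  refine (hf.tendsto_setIntegral_nhds_zero hvol).congr' ?_
  filter_upwards [self_mem_nhdsWithin] with t ht
  rw [Measure.restrict_restrict measurableSet_uIoc,
    inter_eq_left.2 (uIoc_subset_uIcc.trans (hs.uIcc_subset ha ht))]

theorem stmt_3_general (T β q : ℝ) (hβ0 : 0 ≤ β) (hβ1 : β < 1) (hq : 1 < q)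
    (g : ℝ → ℝ) (hgmeas : Measurable g) (hg0 : ∀ t, 0 ≤ g t)
    (hgLq : IntegrableOn (fun t => g t ^ q) (Set.Ioo 0 T))
    (h h' : ℝ → ℝ) (hh0 : ∀ t ∈ Set.Icc (0:ℝ) T, 0 ≤ h t)
    (hh'int : IntegrableOn h' (Set.Icc 0 T))
    (hac : ∀ t ∈ Set.Icc (0:ℝ) T, h t = h 0 + ∫ s in (0:ℝ)..t, h' s)
    (hode : ∀ᵐ t : ℝ, t ∈ Set.Icc (0:ℝ) T → |h' t| ≤ g t * h t ^ β)
    (Tstar : ℝ) (hTstar : Tstar ∈ Set.Icc (0:ℝ) T) (hzero : h Tstar = 0) :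
    Filter.Tendsto (fun t => h t * |t - Tstar| ^ (-((q - 1) / q * (1 / (1 - β)))))
      (nhdsWithin Tstar (Set.Icc 0 T \ {Tstar})) (nhds 0) := by
  have hT : 0 ≤ T := hTstar.1.trans hTstar.2
  have hgq : IntegrableOn (fun t => g t ^ q) (Icc 0 T) := by
    rwa [integrableOn_Icc_iff_integrableOn_Ioo]
  have hcont := continuousOn_of_eq_add_primitive hT hh'int hac
  have hbound : ∀ t ∈ Icc 0 T \ {Tstar}, h t * |t - Tstar| ^ (-((q - 1) / q * (1 / (1 - β))))
      ≤ (∫ s in Ι Tstar t, g s ^ q) ^ (q⁻¹ * (1 - β)⁻¹) := by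
    rintro t ⟨ht, htne⟩
    have hsub : uIcc Tstar t ⊆ Icc 0 T := uIcc_subset_Icc hTstar ht
    have hη : (q - 1) / q * (1 / (1 - β)) = (1 - q⁻¹) * (1 - β)⁻¹ := by field_simp
    rw [hη]
    refine mul_abs_sub_rpow_le_setIntegral_uIoc_rpow_of_abs_le_mul_rpow hβ0 hβ1 hq
      (Ne.symm htne) (hcont.mono hsub) (fun s hs => hh0 s (hsub hs)) (fun s hs => ?_)
      (fun s _ => hg0 s) hgmeas.aestronglyMeasurable (hgq.mono_set (uIoc_subset_uIcc.trans hsub))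
      (by filter_upwards [hode] with s hs hs' using hs (hsub (uIoc_subset_uIcc hs')))
    rw [eq_add_integral_of_eq_add_primitive hT hh'int hac hTstar (hsub hs), hzero, zero_add]
  have hr : 0 < q⁻¹ * (1 - β)⁻¹ := mul_pos (by positivity) (inv_pos.2 (by linarith))
  have hJ : Tendsto (fun t => (∫ s in Ι Tstar t, g s ^ q) ^ (q⁻¹ * (1 - β)⁻¹))
      (𝓝[Icc 0 T \ {Tstar}] Tstar) (𝓝 0) := by
    simpa [Real.zero_rpow hr.ne'] using
      ((tendsto_setIntegral_uIoc_nhdsWithin hgq hTstar).rpow_const (Or.inr hr.le)).mono_left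
        (nhdsWithin_mono Tstar (sdiff_subset (t := {Tstar})))
  refine tendsto_of_tendsto_of_tendsto_of_le_of_le' tendsto_const_nhds hJ ?_ ?_
  · filter_upwards [self_mem_nhdsWithin] with t ht
    exact mul_nonneg (hh0 t ht.1) (Real.rpow_nonneg (abs_nonneg _) _)
  · filter_upwards [self_mem_nhdsWithin] with t ht using hbound t ht

/-- Starovoitov collision rate: Let `T > 0`, `0 ≤ β < 1`, `1 < q < ∞`,
`g : [0,T] → [0,∞)` measurable with `g ∈ L^q(0,T)`, and let `h : [0,T] → [0,∞)` be
absolutely continuous (encoded by an integrable a.e. derivative `h'` with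
`h t = h 0 + ∫₀ᵗ h'`) satisfying `|h′(t)| ≤ g(t)·h(t)^β` a.e. If `h(T*) = 0` for some
`T* ∈ [0,T]`, then `h(t)·|t − T*|^{−η} → 0` as `t → T*` in `[0,T] \ {T*}`, where
`η = ((q−1)/q)·1/(1−β)`. -/
theorem stmt_3 (T β q : ℝ) (hT : 0 < T) (hβ0 : 0 ≤ β) (hβ1 : β < 1) (hq : 1 < q)
    (g : ℝ → ℝ) (hgmeas : Measurable g) (hg0 : ∀ t, 0 ≤ g t)
    (hgLq : IntegrableOn (fun t => g t ^ q) (Set.Ioo 0 T))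
    (h h' : ℝ → ℝ) (hh0 : ∀ t ∈ Set.Icc (0:ℝ) T, 0 ≤ h t)
    (hh'int : IntegrableOn h' (Set.Icc 0 T))
    (hac : ∀ t ∈ Set.Icc (0:ℝ) T, h t = h 0 + ∫ s in (0:ℝ)..t, h' s)
    (hode : ∀ᵐ t : ℝ, t ∈ Set.Icc (0:ℝ) T → |h' t| ≤ g t * h t ^ β)
    (Tstar : ℝ) (hTstar : Tstar ∈ Set.Icc (0:ℝ) T) (hzero : h Tstar = 0) :
    Filter.Tendsto (fun t => h t * |t - Tstar| ^ (-((q - 1) / q * (1 / (1 - β)))))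
      (nhdsWithin Tstar (Set.Icc 0 T \ {Tstar})) (nhds 0) :=
  stmt_3_general T β q hβ0 hβ1 hq g hgmeas hg0 hgLq h h' hh0 hh'int hac hode Tstar hTstar hzero
end

section
/- Let T > 0, β > 1, and let g : [0,T] → [0,∞) be measurable and Lebesgue integrable. Let h : [0,T] → [0,∞) be continuous, and differentiable at every point where h > 0, with |h′(t)| ≤ g(t) · h(t)^β at every t where h(t) > 0 (with the derivative inequality holding almost everywhere on the open set {h > 0}). If h(T*) > 0 for some T* ∈ [0,T], then h(t) > 0 for all t ∈ [0,T]. -/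
/-!
Put `u = h ^ (1 - β)`. Where `h > 0`, the chain rule and the differential inequality give
`|u'| ≤ (β - 1) g`, so on a segment `[T*, z]` joining `T*` to a nearest zero `z` of `h`,
`u` stays below `u T* + (β - 1) ∫ |g|`. But `u → ∞` as `h → 0⁺` since `1 - β < 0`, which rules
out the zero `z`.
-/

open MeasureTheory Set Filter Topology Interval

theorem abs_sub_le_of_ae_abs_deriv_le {u G : ℝ → ℝ} {a b : ℝ} (hu : ContinuousOn u (uIcc a b))
    (hdiff : ∀ x ∈ uIoo a b, DifferentiableAt ℝ u x) (hG : IntervalIntegrable G volume a b)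
    (hbound : ∀ᵐ x, x ∈ uIoo a b → |deriv u x| ≤ G x) :
    |u b - u a| ≤ |∫ x in a..b, G x| := by
  -- `deriv u` is measurable, so the a.e. bound alone makes it integrable.
  have hbound' : ∀ᵐ x ∂volume.restrict (Ι a b), ‖deriv u x‖ ≤ G x := by
    rw [ae_restrict_iff' measurableSet_uIoc]
    filter_upwards [hbound, (Ioo_ae_eq_Ioc (a := min a b) (b := max a b)).mem_iff] with x hx hmem
    exact fun hx' => hx (hmem.2 hx')
  have hint : IntervalIntegrable (deriv u) volume a b :=
    hG.mono_fun' (measurable_deriv u).aestronglyMeasurable hbound'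
  rw [← intervalIntegral.integral_deriv_eq_sub_uIoo hu hdiff hint, ← Real.norm_eq_abs]
  exact intervalIntegral.norm_integral_le_abs_of_norm_le hbound' hG

theorem abs_mul_rpow_sub_one_le {β c y y' : ℝ} (hβ : 1 ≤ β) (hy : 0 < y)
    (hy' : |y'| ≤ c * y ^ β) : |y' * (1 - β) * y ^ (1 - β - 1)| ≤ (β - 1) * c := by
  have hcancel : y ^ β * y ^ (1 - β - 1) = 1 := by
    rw [← Real.rpow_add hy, show β + (1 - β - 1) = 0 by ring, Real.rpow_zero]
  rw [abs_mul, abs_mul, abs_of_nonpos (by linarith : 1 - β ≤ 0), neg_sub,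
    abs_of_pos (Real.rpow_pos_of_pos hy _)]
  calc |y'| * (β - 1) * y ^ (1 - β - 1)
      ≤ c * y ^ β * (β - 1) * y ^ (1 - β - 1) := by gcongr
    _ = (β - 1) * c := by linear_combination (β - 1) * c * hcancel

theorem Set.uIoo_subset_uIoo_of_mem {α : Type*} [LinearOrder α] {a b c : α} (h : c ∈ uIoo a b) :
    uIoo a c ⊆ uIoo a b := by
  intro x hx
  simp only [uIoo, mem_Ioo] at *
  grind

theorem Set.notMem_uIcc_of_mem_uIoo {α : Type*} [LinearOrder α] {a b c : α} (h : c ∈ uIoo a b) :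
    b ∉ uIcc a c := by
  simp only [uIoo, uIcc, mem_Ioo, mem_Icc] at *
  grind

theorem IsCompact.exists_nearest_mem {S : Set ℝ} (hS : IsCompact S) (hne : S.Nonempty) (p : ℝ) :
    ∃ z ∈ S, ∀ x ∈ S, x ∈ uIcc p z → x = z := by
  obtain ⟨z, hz, hmin⟩ :=
    hS.exists_isMinOn hne (continuous_id.sub continuous_const).abs.continuousOn
  refine ⟨z, hz, fun x hx hxpz => ?_⟩
  have h1 : |z - p| ≤ |x - p| := hmin hx
  rcases mem_uIcc.1 hxpz with ⟨h2, h3⟩ | ⟨h2, h3⟩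
  · rw [abs_of_nonneg (by linarith), abs_of_nonneg (by linarith)] at h1; linarith
  · rw [abs_of_nonpos (by linarith), abs_of_nonpos (by linarith)] at h1; linarith

theorem ne_zero_of_abs_deriv_le_mul_rpow {β p z : ℝ} {g h h' : ℝ → ℝ} (hβ : 1 < β) (hpz : p ≠ z)
    (hg : IntegrableOn g (uIcc p z)) (hcont : ContinuousOn h (uIcc p z))
    (hpos : ∀ t ∈ uIcc p z, t ≠ z → 0 < h t)
    (hderiv : ∀ t ∈ uIoo p z, HasDerivAt h (h' t) t)
    (hode : ∀ᵐ t, t ∈ uIoo p z → |h' t| ≤ g t * h t ^ β) : h z ≠ 0 := by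
  intro hz
  set u : ℝ → ℝ := fun t => h t ^ (1 - β)
  have hpos_Ioo : ∀ t ∈ uIoo p z, 0 < h t := fun t ht =>
    hpos t (uIoo_subset_uIcc_self ht) (ne_of_mem_of_not_mem ht right_notMem_uIoo)
  have hu_deriv : ∀ t ∈ uIoo p z, HasDerivAt u (h' t * (1 - β) * h t ^ (1 - β - 1)) t :=
    fun t ht => (hderiv t ht).rpow_const (Or.inl (hpos_Ioo t ht).ne')
  have hu_bound : ∀ᵐ t, t ∈ uIoo p z → |deriv u t| ≤ (β - 1) * g t := by
    filter_upwards [hode] with t ht hmem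
    rw [(hu_deriv t hmem).deriv]
    exact abs_mul_rpow_sub_one_le hβ.le (hpos_Ioo t hmem) (ht hmem)
  have hG : IntegrableOn (fun x => (β - 1) * g x) (uIcc p z) := hg.const_mul _
  set C := ∫ x in uIcc p z, |(β - 1) * g x|
  have hu_le : ∀ t ∈ uIoo p z, u t ≤ u p + C := by
    intro t ht
    have hsub : uIcc p t ⊆ uIcc p z := uIcc_subset_uIcc left_mem_uIcc (uIoo_subset_uIcc_self ht)
    have hvar : |u t - u p| ≤ |∫ x in p..t, (β - 1) * g x| := by
      refine abs_sub_le_of_ae_abs_deriv_le ?_ (fun x hx => (hu_deriv x ?_).differentiableAt)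
        (hG.mono_set hsub).intervalIntegrable ?_
      · refine (hcont.mono hsub).rpow_const fun x hx => Or.inl (hpos x (hsub hx) ?_).ne'
        exact ne_of_mem_of_not_mem hx (notMem_uIcc_of_mem_uIoo ht)
      · exact uIoo_subset_uIoo_of_mem ht hx
      · filter_upwards [hu_bound] with x hx hmem using hx (uIoo_subset_uIoo_of_mem ht hmem)
    have hint : |∫ x in p..t, (β - 1) * g x| ≤ C :=
      calc |∫ x in p..t, (β - 1) * g x| ≤ ∫ x in Ι p t, |(β - 1) * g x| := by
            simpa only [Real.norm_eq_abs] using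
              intervalIntegral.norm_integral_le_integral_norm_uIoc (f := fun x => (β - 1) * g x)
        _ ≤ C := setIntegral_mono_set hG.abs (Eventually.of_forall fun _ => abs_nonneg _)
            (uIoc_subset_uIcc.trans hsub).eventuallyLE
    linarith [abs_le.1 (hvar.trans hint)]
  have hu_tendsto : Tendsto u (𝓝[uIoo p z] z) atTop := by
    refine (tendsto_rpow_neg_nhdsGT_zero (by linarith : 1 - β < 0)).comp ?_
    refine tendsto_nhdsWithin_iff.2 ⟨?_, eventually_nhdsWithin_of_forall hpos_Ioo⟩
    rw [← hz]
    exact ((hcont z right_mem_uIcc).mono uIoo_subset_uIcc_self).tendsto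
  have hne : (𝓝[uIoo p z] z).NeBot := by
    rw [← mem_closure_iff_nhdsWithin_neBot, closure_uIoo hpz]
    exact right_mem_uIcc
  obtain ⟨t, hlarge, ht⟩ :=
    ((hu_tendsto.eventually_gt_atTop (u p + C)).and self_mem_nhdsWithin).exists
  exact (hu_le t ht).not_gt hlarge

theorem stmt_5_general (T β : ℝ) (hβ : 1 < β)
    (g : ℝ → ℝ)
    (hgint : IntegrableOn g (Set.Icc 0 T))
    (h h' : ℝ → ℝ) (hh0 : ∀ t ∈ Set.Icc (0:ℝ) T, 0 ≤ h t)
    (hcont : ContinuousOn h (Set.Icc 0 T))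
    (hdiff : ∀ t ∈ Set.Icc (0:ℝ) T, 0 < h t → HasDerivWithinAt h (h' t) (Set.Icc 0 T) t)
    (hode : ∀ᵐ t : ℝ, t ∈ Set.Icc (0:ℝ) T → 0 < h t → |h' t| ≤ g t * h t ^ β)
    (Tstar : ℝ) (hTstar : Tstar ∈ Set.Icc (0:ℝ) T) (hpos : 0 < h Tstar) :
    ∀ t ∈ Set.Icc (0:ℝ) T, 0 < h t := by
  intro t ht
  by_contra hnot
  have hZ : IsCompact (Icc 0 T ∩ h ⁻¹' {0}) := isCompact_Icc.of_isClosed_subset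
    (hcont.preimage_isClosed_of_isClosed isClosed_Icc isClosed_singleton) inter_subset_left
  obtain ⟨z, ⟨hzI, hz0 : h z = 0⟩, hnearest⟩ :=
    hZ.exists_nearest_mem ⟨t, ht, ((hh0 t ht).antisymm (not_lt.1 hnot)).symm⟩ Tstar
  have hsub : uIcc Tstar z ⊆ Icc 0 T := uIcc_subset_Icc hTstar hzI
  have hsub' : uIoo Tstar z ⊆ Ioo 0 T :=
    Ioo_subset_Ioo (le_min hTstar.1 hzI.1) (max_le hTstar.2 hzI.2)
  have hpos_Icc : ∀ x ∈ uIcc Tstar z, x ≠ z → 0 < h x := fun x hx hxz =>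
    (hh0 x (hsub hx)).lt_of_ne fun hx0 => hxz (hnearest x ⟨hsub hx, hx0.symm⟩ hx)
  have hpos_Ioo : ∀ x ∈ uIoo Tstar z, 0 < h x := fun x hx =>
    hpos_Icc x (uIoo_subset_uIcc_self hx) (ne_of_mem_of_not_mem hx right_notMem_uIoo)
  have hderiv : ∀ x ∈ uIoo Tstar z, HasDerivAt h (h' x) x := fun x hx =>
    (hdiff x (Ioo_subset_Icc_self (hsub' hx)) (hpos_Ioo x hx)).hasDerivAt
      (Icc_mem_nhds (hsub' hx).1 (hsub' hx).2)
  have hode' : ∀ᵐ x, x ∈ uIoo Tstar z → |h' x| ≤ g x * h x ^ β := by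
    filter_upwards [hode] with x hx hmem
      using hx (Ioo_subset_Icc_self (hsub' hmem)) (hpos_Ioo x hmem)
  exact ne_zero_of_abs_deriv_le_mul_rpow hβ (ne_of_apply_ne h (hz0 ▸ hpos.ne'))
    (hgint.mono_set hsub) (hcont.mono hsub) hpos_Icc hderiv hode' hz0

/-- Starovoitov no-collision, case β > 1: Let `T > 0`, `β > 1`,
`g : [0,T] → [0,∞)` measurable and integrable, and `h : [0,T] → [0,∞)` continuous,
differentiable (within `[0,T]`) at every point where `h > 0`, with
`|h′(t)| ≤ g(t)·h(t)^β` holding almost everywhere on `{h > 0}`. If `h(T*) > 0` for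
some `T* ∈ [0,T]`, then `h(t) > 0` for all `t ∈ [0,T]`. -/
theorem stmt_5 (T β : ℝ) (hT : 0 < T) (hβ : 1 < β)
    (g : ℝ → ℝ) (hgmeas : Measurable g) (hg0 : ∀ t, 0 ≤ g t)
    (hgint : IntegrableOn g (Set.Icc 0 T))
    (h h' : ℝ → ℝ) (hh0 : ∀ t ∈ Set.Icc (0:ℝ) T, 0 ≤ h t)
    (hcont : ContinuousOn h (Set.Icc 0 T))
    (hdiff : ∀ t ∈ Set.Icc (0:ℝ) T, 0 < h t → HasDerivWithinAt h (h' t) (Set.Icc 0 T) t)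
    (hode : ∀ᵐ t : ℝ, t ∈ Set.Icc (0:ℝ) T → 0 < h t → |h' t| ≤ g t * h t ^ β)
    (Tstar : ℝ) (hTstar : Tstar ∈ Set.Icc (0:ℝ) T) (hpos : 0 < h Tstar) :
    ∀ t ∈ Set.Icc (0:ℝ) T, 0 < h t :=
  stmt_5_general T β hβ g hgint h h' hh0 hcont hdiff hode Tstar hTstar hpos
end

section
/- Let σ ∈ (0,1), a ∈ ℝ, and let n ≥ 1 be an integer. Define β(θ) = −2aσ(2σ − (1+σ²)cos θ)/(1 + σ² − 2σ cos θ)². Then ∫₀^{2π} β(θ) cos(nθ) dθ = 2π a n σⁿ, and ∫₀^{2π} β(θ) sin(nθ) dθ = 0. -/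
/-!
With `z = σ e^{iθ}` the integrand's first factor is `2a · Re (z / (1 - z)²)
= 2a · ∑_{k ≥ 1} k σᵏ cos kθ`. The series is dominated by the summable `∑ k σᵏ`, so it may be
integrated term by term against `cos nθ` and `sin nθ`; orthogonality of the trigonometric system
on `[0, 2π]` then leaves only `2a · n σⁿ π` and `0`.
-/

open MeasureTheory intervalIntegral Real

theorem hasSum_nat_mul_pow_mul_cos {σ : ℝ} (hσ : |σ| < 1) (θ : ℝ) :
    HasSum (fun k : ℕ => k * σ ^ k * cos (k * θ))
      (σ * ((1 + σ ^ 2) * cos θ - 2 * σ) / (1 + σ ^ 2 - 2 * σ * cos θ) ^ 2) := by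
  set z : ℂ := σ * Complex.exp (θ * Complex.I)
  have hz : ‖z‖ < 1 := by simpa [z] using hσ
  convert (hasSum_coe_mul_geometric_of_norm_lt_one hz).mapL Complex.reCLM using 1
  · ext k
    rw [Complex.reCLM_apply, mul_pow, ← Complex.exp_nat_mul, ← Complex.ofReal_pow, ← mul_assoc,
      ← Complex.ofReal_natCast, ← Complex.ofReal_mul, Complex.re_ofReal_mul,
      ← mul_assoc, ← Complex.ofReal_mul, Complex.exp_ofReal_mul_I_re]
  · have hre : z.re = σ * cos θ := by simp [z, Complex.exp_ofReal_mul_I_re]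
    have him : z.im = σ * sin θ := by simp [z, Complex.exp_ofReal_mul_I_im]
    have hnorm : Complex.normSq (1 - z) = 1 + σ ^ 2 - 2 * σ * cos θ := by
      rw [Complex.normSq_apply]
      simp only [Complex.sub_re, Complex.sub_im, Complex.one_re, Complex.one_im, hre, him]
      linear_combination σ ^ 2 * sin_sq_add_cos_sq θ
    rw [Complex.reCLM_apply, Complex.div_re, map_pow, hnorm, ← add_div]
    congr 1
    simp only [pow_two, Complex.mul_re, Complex.mul_im, Complex.sub_re, Complex.sub_im,
      Complex.one_re, Complex.one_im, hre, him]
    linear_combination σ ^ 2 * (2 - σ * cos θ) * sin_sq_add_cos_sq θ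

theorem hasSum_integral_nat_mul_pow_mul_cos_mul {σ : ℝ} (hσ : |σ| < 1) {g : ℝ → ℝ} {C : ℝ}
    (hg : Continuous g) (hgC : ∀ θ, |g θ| ≤ C) (a b : ℝ) :
    HasSum (fun k : ℕ => k * σ ^ k * ∫ θ in a..b, cos (k * θ) * g θ)
      (∫ θ in a..b, σ * ((1 + σ ^ 2) * cos θ - 2 * σ) /
        (1 + σ ^ 2 - 2 * σ * cos θ) ^ 2 * g θ) := by
  have hsum : Summable fun k : ℕ => k * |σ| ^ k * C := by
    simpa using (summable_pow_mul_geometric_of_norm_lt_one 1 (r := |σ|) (by simpa)).mul_right C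
  simp_rw [← intervalIntegral.integral_const_mul, ← mul_assoc]
  refine hasSum_integral_of_dominated_convergence (fun k _ => k * |σ| ^ k * C)
    (fun k => by fun_prop) (fun k => ae_of_all _ fun θ _ => ?_) (ae_of_all _ fun _ _ => hsum)
    intervalIntegrable_const
    (ae_of_all _ fun θ _ => (hasSum_nat_mul_pow_mul_cos hσ θ).mul_right (g θ))
  rw [norm_eq_abs, abs_mul, abs_mul, abs_mul, Nat.abs_cast, abs_pow]
  calc _ ≤ k * |σ| ^ k * 1 * C := by
        gcongr
        exacts [abs_cos_le_one _, hgC θ]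
    _ = _ := by ring

theorem integral_cos_int_mul_of_ne_zero {m : ℤ} (hm : m ≠ 0) :
    ∫ x in (0 : ℝ)..2 * π, cos (m * x) = 0 := by
  rw [integral_comp_mul_left cos (Int.cast_ne_zero.mpr hm), integral_cos, mul_zero,
    sin_zero, sub_zero, ← mul_assoc, mul_comm (m : ℝ), ← Int.cast_ofNat, ← Int.cast_mul,
    sin_int_mul_pi, smul_zero]

theorem integral_sin_int_mul (m : ℤ) : ∫ x in (0 : ℝ)..2 * π, sin (m * x) = 0 := by
  rcases eq_or_ne m 0 with rfl | hm
  · simp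
  rw [integral_comp_mul_left sin (Int.cast_ne_zero.mpr hm), integral_sin, mul_zero, cos_zero,
    cos_int_mul_two_pi, sub_self, smul_zero]

theorem integral_cos_nat_mul_mul_cos_nat_mul {k : ℕ} (hk : k ≠ 0) (n : ℕ) :
    ∫ x in (0 : ℝ)..2 * π, cos (k * x) * cos (n * x) = if k = n then π else 0 := by
  have hsplit : ∀ x : ℝ, cos (k * x) * cos (n * x) =
      cos (((k - n : ℤ) : ℝ) * x) / 2 + cos (((k + n : ℤ) : ℝ) * x) / 2 := fun x => by
    push_cast
    rw [sub_mul, add_mul, cos_sub, cos_add]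
    ring
  have hint : ∀ m : ℤ, IntervalIntegrable (fun x : ℝ => cos (m * x) / 2) volume 0 (2 * π) :=
    fun m => (by fun_prop : Continuous fun x : ℝ => cos (m * x) / 2).intervalIntegrable _ _
  simp_rw [hsplit]
  rw [integral_add (hint _) (hint _), intervalIntegral.integral_div, intervalIntegral.integral_div,
    integral_cos_int_mul_of_ne_zero (m := k + n) (by omega)]
  split_ifs with hkn
  · simp [hkn]
  · rw [integral_cos_int_mul_of_ne_zero (m := k - n) (by omega)]
    simp

theorem integral_cos_nat_mul_mul_sin_nat_mul (k n : ℕ) :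
    ∫ x in (0 : ℝ)..2 * π, cos (k * x) * sin (n * x) = 0 := by
  have hsplit : ∀ x : ℝ, cos (k * x) * sin (n * x) =
      sin (((n + k : ℤ) : ℝ) * x) / 2 + sin (((n - k : ℤ) : ℝ) * x) / 2 := fun x => by
    push_cast
    rw [add_mul, sub_mul, sin_add, sin_sub]
    ring
  have hint : ∀ m : ℤ, IntervalIntegrable (fun x : ℝ => sin (m * x) / 2) volume 0 (2 * π) :=
    fun m => (by fun_prop : Continuous fun x : ℝ => sin (m * x) / 2).intervalIntegrable _ _
  simp_rw [hsplit]
  rw [integral_add (hint _) (hint _), intervalIntegral.integral_div, intervalIntegral.integral_div,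
    integral_sin_int_mul, integral_sin_int_mul, zero_div, add_zero]

theorem stmt_16_general (σ a : ℝ) (hσ : σ ∈ Set.Ioo (0:ℝ) 1) (n : ℕ) :
    (∫ θ in (0:ℝ)..(2 * Real.pi),
        (-(2 * a * σ) * (2 * σ - (1 + σ ^ 2) * Real.cos θ)
            / (1 + σ ^ 2 - 2 * σ * Real.cos θ) ^ 2) * Real.cos (n * θ))
      = 2 * Real.pi * a * n * σ ^ n ∧
    (∫ θ in (0:ℝ)..(2 * Real.pi),
        (-(2 * a * σ) * (2 * σ - (1 + σ ^ 2) * Real.cos θ)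
            / (1 + σ ^ 2 - 2 * σ * Real.cos θ) ^ 2) * Real.sin (n * θ)) = 0 := by
  have hσ₁ : |σ| < 1 := abs_lt.mpr ⟨by linarith [hσ.1], hσ.2⟩
  have hβ : ∀ g : ℝ → ℝ, (fun θ => -(2 * a * σ) * (2 * σ - (1 + σ ^ 2) * cos θ)
      / (1 + σ ^ 2 - 2 * σ * cos θ) ^ 2 * g θ) = fun θ => 2 * a *
        (σ * ((1 + σ ^ 2) * cos θ - 2 * σ) / (1 + σ ^ 2 - 2 * σ * cos θ) ^ 2 * g θ) :=
    fun g => funext fun θ => by ring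
  have hcos := hasSum_integral_nat_mul_pow_mul_cos_mul hσ₁ (g := fun θ => cos (n * θ))
    (by fun_prop) (fun θ => abs_cos_le_one _) 0 (2 * π)
  have hsin := hasSum_integral_nat_mul_pow_mul_cos_mul hσ₁ (g := fun θ => sin (n * θ))
    (by fun_prop) (fun θ => abs_sin_le_one _) 0 (2 * π)
  have hcos_terms : ∀ k : ℕ, k * σ ^ k * ∫ θ in (0 : ℝ)..2 * π, cos (k * θ) * cos (n * θ) =
      if k = n then n * σ ^ n * π else 0 := fun k => by
    rcases eq_or_ne k 0 with rfl | hk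
    · split_ifs with h
      · simp [← h]
      · simp
    rw [integral_cos_nat_mul_mul_cos_nat_mul hk]
    split_ifs with hkn <;> simp [hkn]
  simp_rw [hcos_terms, integral_cos_nat_mul_mul_sin_nat_mul, mul_zero] at hcos hsin
  rw [hβ, hβ, intervalIntegral.integral_const_mul, intervalIntegral.integral_const_mul,
    hsin.unique hasSum_zero, hcos.unique (hasSum_ite_eq n _)]
  constructor <;> ring

/-- For `σ ∈ (0,1)`, `a ∈ ℝ`, `n ≥ 1`, and
`β(θ) = −2aσ(2σ − (1+σ²)cos θ)/(1 + σ² − 2σ cos θ)²`, one has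
`∫₀^{2π} β(θ) cos(nθ) dθ = 2π a n σⁿ` and `∫₀^{2π} β(θ) sin(nθ) dθ = 0`. -/
theorem stmt_16 (σ a : ℝ) (hσ : σ ∈ Set.Ioo (0:ℝ) 1) (n : ℕ) (hn : 1 ≤ n) :
    (∫ θ in (0:ℝ)..(2 * Real.pi),
        (-(2 * a * σ) * (2 * σ - (1 + σ ^ 2) * Real.cos θ)
            / (1 + σ ^ 2 - 2 * σ * Real.cos θ) ^ 2) * Real.cos (n * θ))
      = 2 * Real.pi * a * n * σ ^ n ∧
    (∫ θ in (0:ℝ)..(2 * Real.pi),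
        (-(2 * a * σ) * (2 * σ - (1 + σ ^ 2) * Real.cos θ)
            / (1 + σ ^ 2 - 2 * σ * Real.cos θ) ^ 2) * Real.sin (n * θ)) = 0 :=
  stmt_16_general σ a hσ n
end

section
/- For every σ ∈ (0,1), setting a = (σ⁻¹ − σ)/2, the following identity of convergent series holds: 4π a² Σ_{n≥1} n σ^{2n} (1 + σ^{2n})/(1 − σ^{2n}) = 2π Σ_{n≥1} σ^{2n−2} ((1 − σ²)/(1 − σ^{2n}))² − π. In particular both series converge for σ ∈ (0,1). -/
/-- Geometric sum shifted: `∑' k, x^(k+1) = x/(1-x)`. -/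
lemma aux_geom (x : ℝ) (h0 : 0 ≤ x) (h1 : x < 1) :
    Summable (fun k : ℕ => x ^ (k + 1)) ∧ ∑' k : ℕ, x ^ (k + 1) = x / (1 - x) := by
  have hg : Summable (fun k : ℕ => x ^ k) := summable_geometric_of_lt_one h0 h1
  have hs : Summable (fun k : ℕ => x ^ (k + 1)) := by
    simpa [pow_succ] using hg.mul_right x
  refine ⟨hs, ?_⟩
  have : ∑' k : ℕ, x ^ (k + 1) = (∑' k : ℕ, x ^ k) * x := by
    simp_rw [pow_succ]; exact tsum_mul_right
  rw [this, tsum_geometric_of_lt_one h0 h1, div_eq_inv_mul]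

/-- `∑' k, (k+1) x^(k+1) = x/(1-x)²`. -/
lemma aux_coe_geom (x : ℝ) (h0 : 0 ≤ x) (h1 : x < 1) :
    Summable (fun k : ℕ => ((k : ℝ) + 1) * x ^ (k + 1)) ∧
      ∑' k : ℕ, ((k : ℝ) + 1) * x ^ (k + 1) = x / (1 - x) ^ 2 := by
  have hnorm : ‖x‖ < 1 := by rwa [Real.norm_eq_abs, abs_of_nonneg h0]
  have hs0 : Summable (fun k : ℕ => (k : ℝ) * x ^ k) := by
    simpa using summable_pow_mul_geometric_of_norm_lt_one 1 hnorm
  have hs : Summable (fun k : ℕ => ((k : ℝ) + 1) * x ^ (k + 1)) := by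
    have := (summable_nat_add_iff 1).mpr hs0
    simpa [Nat.cast_add] using this
  refine ⟨hs, ?_⟩
  have h0' := Summable.tsum_eq_zero_add hs0
  have : ∑' k : ℕ, (k : ℝ) * x ^ k = ∑' k : ℕ, ((k : ℝ) + 1) * x ^ (k + 1) := by
    rw [h0']; push_cast; ring_nf
  rw [← this, tsum_coe_mul_geometric_of_norm_lt_one hnorm]

lemma aux_alg1 (c x : ℝ) (hx : 1 - x ≠ 0) :
    c * x * (1 + x) / (1 - x) = 2 * (c * x / (1 - x)) - c * x := by
  field_simp
  ring

lemma aux_alg2 (q y : ℝ) (hq : q ≠ 0) (hy : y ≠ 0) (m : ℕ) :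
    q ^ m * ((1 - q) / y) ^ 2 = (1 - q) ^ 2 / q * (q ^ (m + 1) / y ^ 2) := by
  rw [pow_succ, div_pow]
  field_simp
  ring

set_option maxHeartbeats 1000000 in
/-- For `σ ∈ (0,1)` and `a = (σ⁻¹ − σ)/2`, both series below converge and
`4πa² Σ_{n≥1} n σ^{2n}(1 + σ^{2n})/(1 − σ^{2n})
  = 2π Σ_{n≥1} σ^{2n−2}((1 − σ²)/(1 − σ^{2n}))² − π`.
(The series are indexed by `n = m + 1`, `m : ℕ`.) -/
theorem stmt_17 (σ : ℝ) (hσ : σ ∈ Set.Ioo (0:ℝ) 1) (a : ℝ) (ha : a = (σ⁻¹ - σ) / 2) :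
    Summable (fun m : ℕ =>
      ((m + 1 : ℕ) : ℝ) * σ ^ (2 * (m + 1)) * (1 + σ ^ (2 * (m + 1)))
        / (1 - σ ^ (2 * (m + 1)))) ∧
    Summable (fun m : ℕ =>
      σ ^ (2 * m) * ((1 - σ ^ 2) / (1 - σ ^ (2 * (m + 1)))) ^ 2) ∧
    4 * Real.pi * a ^ 2 *
        (∑' m : ℕ, ((m + 1 : ℕ) : ℝ) * σ ^ (2 * (m + 1)) * (1 + σ ^ (2 * (m + 1)))
          / (1 - σ ^ (2 * (m + 1))))
      = 2 * Real.pi *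
          (∑' m : ℕ, σ ^ (2 * m) * ((1 - σ ^ 2) / (1 - σ ^ (2 * (m + 1)))) ^ 2)
        - Real.pi := by
  obtain ⟨hσ0, hσ1⟩ := hσ
  set q : ℝ := σ ^ 2 with hqdef
  have hq0 : 0 < q := by positivity
  have hq1 : q < 1 := by
    rw [hqdef]; exact pow_lt_one₀ hσ0.le hσ1 two_ne_zero
  have hqn1 : ∀ n : ℕ, q ^ (n + 1) < 1 := fun n =>
    pow_lt_one₀ hq0.le hq1 (Nat.succ_ne_zero n)
  have hqn0 : ∀ n : ℕ, 0 < q ^ (n + 1) := fun n => pow_pos hq0 _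
  have hden : ∀ n : ℕ, 0 < 1 - q ^ (n + 1) := fun n => by linarith [hqn1 n]
  have hqle : ∀ n : ℕ, q ^ (n + 1) ≤ q := fun n => by
    calc q ^ (n + 1) ≤ q ^ 1 := pow_le_pow_of_le_one hq0.le hq1.le (Nat.succ_le_succ (Nat.zero_le n))
    _ = q := pow_one q
  have hdq : (0:ℝ) < 1 - q := by linarith
  -- σ-power rewriting
  have hσpow : ∀ m : ℕ, σ ^ (2 * (m + 1)) = q ^ (m + 1) := fun m => by
    rw [pow_mul]
  have hσpow' : ∀ m : ℕ, σ ^ (2 * m) = q ^ m := fun m => by rw [pow_mul]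
  -- summable (n+1) q^(n+1)
  have hS : Summable (fun n : ℕ => ((n : ℝ) + 1) * q ^ (n + 1)) :=
    (aux_coe_geom q hq0.le hq1).1
  have hSval : ∑' n : ℕ, ((n : ℝ) + 1) * q ^ (n + 1) = q / (1 - q) ^ 2 :=
    (aux_coe_geom q hq0.le hq1).2
  -- T1 terms
  have hT1sum : Summable (fun n : ℕ => ((n : ℝ) + 1) * q ^ (n + 1) / (1 - q ^ (n + 1))) := by
    apply Summable.of_nonneg_of_le (fun n => div_nonneg (by positivity) (hden n).le)
      (fun n => ?_) (hS.mul_right (1 - q)⁻¹)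
    rw [div_eq_mul_inv]
    apply mul_le_mul_of_nonneg_left _ (by positivity)
    apply inv_anti₀ hdq
    linarith [hqle n]
  -- T2 terms
  have hT2sum : Summable (fun n : ℕ => q ^ (n + 1) / (1 - q ^ (n + 1)) ^ 2) := by
    apply Summable.of_nonneg_of_le (fun n => by positivity)
      (fun n => ?_) (((aux_geom q hq0.le hq1).1).mul_right ((1 - q) ^ 2)⁻¹)
    rw [div_eq_mul_inv]
    apply mul_le_mul_of_nonneg_left _ (by positivity)
    apply inv_anti₀ (by positivity)
    apply pow_le_pow_left₀ hdq.le
    linarith [hqle n]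
  -- double sum
  set f : ℕ × ℕ → ℝ := fun p => ((p.1 : ℝ) + 1) * q ^ ((p.1 + 1) * (p.2 + 1)) with hfdef
  have hfpow : ∀ n k : ℕ, q ^ ((n + 1) * (k + 1)) = (q ^ (n + 1)) ^ (k + 1) := fun n k =>
    pow_mul q (n + 1) (k + 1)
  have hrow : ∀ n : ℕ, Summable (fun k : ℕ => f (n, k)) := by
    intro n
    simp only [hfdef, hfpow]
    exact ((aux_geom _ (hqn0 n).le (hqn1 n)).1).mul_left _
  have hrowval : ∀ n : ℕ, ∑' k : ℕ, f (n, k)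
      = ((n : ℝ) + 1) * q ^ (n + 1) / (1 - q ^ (n + 1)) := by
    intro n
    simp only [hfdef, hfpow]
    rw [tsum_mul_left, (aux_geom _ (hqn0 n).le (hqn1 n)).2, mul_div_assoc]
  have hfnonneg : ∀ p : ℕ × ℕ, 0 ≤ f p := fun p => by
    simp only [hfdef]; positivity
  have hfsum : Summable f := by
    rw [summable_prod_of_nonneg hfnonneg]
    refine ⟨hrow, ?_⟩
    apply Summable.congr hT1sum
    intro n; exact (hrowval n).symm
  have hfT1 : ∑' p : ℕ × ℕ, f p
      = ∑' n : ℕ, ((n : ℝ) + 1) * q ^ (n + 1) / (1 - q ^ (n + 1)) := by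
    rw [Summable.tsum_prod' hfsum hrow]
    exact tsum_congr hrowval
  -- swapped
  have hswap : ∑' p : ℕ × ℕ, f p = ∑' p : ℕ × ℕ, f (p.2, p.1) := by
    exact ((Equiv.prodComm ℕ ℕ).tsum_eq f).symm
  have hgsum : Summable (fun p : ℕ × ℕ => f (p.2, p.1)) :=
    (Equiv.prodComm ℕ ℕ).summable_iff.mpr hfsum
  have hgrow : ∀ n : ℕ, Summable (fun k : ℕ => f (k, n)) := by
    intro n
    have : (fun k : ℕ => f (k, n)) = fun k : ℕ => ((k : ℝ) + 1) * (q ^ (n + 1)) ^ (k + 1) := by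
      funext k
      simp only [hfdef]
      rw [Nat.mul_comm (k + 1) (n + 1), pow_mul]
    rw [this]
    exact (aux_coe_geom _ (hqn0 n).le (hqn1 n)).1
  have hgrowval : ∀ n : ℕ, ∑' k : ℕ, f (k, n) = q ^ (n + 1) / (1 - q ^ (n + 1)) ^ 2 := by
    intro n
    have : (fun k : ℕ => f (k, n)) = fun k : ℕ => ((k : ℝ) + 1) * (q ^ (n + 1)) ^ (k + 1) := by
      funext k
      simp only [hfdef]
      rw [Nat.mul_comm (k + 1) (n + 1), pow_mul]
    rw [this, (aux_coe_geom _ (hqn0 n).le (hqn1 n)).2]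
  have hfT2 : ∑' p : ℕ × ℕ, f p = ∑' n : ℕ, q ^ (n + 1) / (1 - q ^ (n + 1)) ^ 2 := by
    rw [hswap, Summable.tsum_prod' hgsum (fun n => hgrow n)]
    exact tsum_congr hgrowval
  have hT1T2 : ∑' n : ℕ, ((n : ℝ) + 1) * q ^ (n + 1) / (1 - q ^ (n + 1))
      = ∑' n : ℕ, q ^ (n + 1) / (1 - q ^ (n + 1)) ^ 2 := by
    rw [← hfT1, hfT2]
  -- rewrite series 1 term
  have hterm1 : ∀ m : ℕ, ((m + 1 : ℕ) : ℝ) * σ ^ (2 * (m + 1)) * (1 + σ ^ (2 * (m + 1)))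
      / (1 - σ ^ (2 * (m + 1)))
      = 2 * (((m : ℝ) + 1) * q ^ (m + 1) / (1 - q ^ (m + 1))) - ((m : ℝ) + 1) * q ^ (m + 1) := by
    intro m
    rw [hσpow m]
    push_cast
    exact aux_alg1 ((m : ℝ) + 1) (q ^ (m + 1)) (hden m).ne'
  have hterm2 : ∀ m : ℕ, σ ^ (2 * m) * ((1 - σ ^ 2) / (1 - σ ^ (2 * (m + 1)))) ^ 2
      = (1 - q) ^ 2 / q * (q ^ (m + 1) / (1 - q ^ (m + 1)) ^ 2) := by
    intro m
    rw [hσpow m, hσpow' m, ← hqdef]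
    exact aux_alg2 q _ hq0.ne' (hden m).ne' m
  have hsum1 : Summable (fun m : ℕ =>
      ((m + 1 : ℕ) : ℝ) * σ ^ (2 * (m + 1)) * (1 + σ ^ (2 * (m + 1)))
        / (1 - σ ^ (2 * (m + 1)))) := by
    apply Summable.congr (((hT1sum.mul_left 2)).sub hS)
    intro m; exact (hterm1 m).symm
  have hsum2 : Summable (fun m : ℕ =>
      σ ^ (2 * m) * ((1 - σ ^ 2) / (1 - σ ^ (2 * (m + 1)))) ^ 2) := by
    apply Summable.congr (hT2sum.mul_left ((1 - q) ^ 2 / q))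
    intro m; exact (hterm2 m).symm
  refine ⟨hsum1, hsum2, ?_⟩
  have e1 : ∑' m : ℕ, ((m + 1 : ℕ) : ℝ) * σ ^ (2 * (m + 1)) * (1 + σ ^ (2 * (m + 1)))
      / (1 - σ ^ (2 * (m + 1)))
      = 2 * (∑' n : ℕ, ((n : ℝ) + 1) * q ^ (n + 1) / (1 - q ^ (n + 1))) - q / (1 - q) ^ 2 := by
    rw [tsum_congr hterm1, Summable.tsum_sub (hT1sum.mul_left 2) hS, tsum_mul_left, hSval]
  have e2 : ∑' m : ℕ, σ ^ (2 * m) * ((1 - σ ^ 2) / (1 - σ ^ (2 * (m + 1)))) ^ 2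
      = (1 - q) ^ 2 / q * (∑' n : ℕ, q ^ (n + 1) / (1 - q ^ (n + 1)) ^ 2) := by
    rw [tsum_congr hterm2, tsum_mul_left]
  rw [e1, e2, ← hT1T2]
  have ha2 : a ^ 2 = (1 - q) ^ 2 / (4 * q) := by
    rw [ha, hqdef]
    field_simp
    ring
  rw [ha2]
  set T := ∑' n : ℕ, ((n : ℝ) + 1) * q ^ (n + 1) / (1 - q ^ (n + 1))
  field_simp
end

section
/- Define E : (0,1) → ℝ by E(σ) = 2π Σ_{n≥1} σ^{2n−2} ((1 − σ²)/(1 − σ^{2n}))² − π. Then E is continuous on (0,1), lim_{σ → 0⁺} E(σ) = π, and lim_{σ → 1⁻} E(σ) = π³/3 − π. -/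
open Finset Real

/-- clamp of `x` to `[0,1]`. -/
noncomputable def clamp01 (x : ℝ) : ℝ := max 0 (min x 1)

lemma clamp01_nonneg (x : ℝ) : 0 ≤ clamp01 x := le_max_left _ _
lemma clamp01_le_one (x : ℝ) : clamp01 x ≤ 1 := max_le zero_le_one (min_le_right _ _)
lemma clamp01_eq (x : ℝ) (h0 : 0 ≤ x) (h1 : x ≤ 1) : clamp01 x = x := by
  unfold clamp01; rw [min_eq_left h1, max_eq_right h0]

lemma continuous_clamp01 : Continuous clamp01 :=
  continuous_const.max (continuous_id.min continuous_const)

noncomputable def gterm (n : ℕ) (x : ℝ) : ℝ :=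
  (clamp01 x) ^ n / (∑ k ∈ Finset.range (n + 1), (clamp01 x) ^ k) ^ 2

lemma sum_sq_pow_ge (s : ℝ) (n : ℕ) :
    (n + 1 : ℝ) * s ^ n ≤ ∑ k ∈ Finset.range (n + 1), (s ^ 2) ^ k := by
  have key : ∀ k ∈ Finset.range (n + 1),
      2 * s ^ n ≤ (s ^ 2) ^ k + (s ^ 2) ^ (n - k) := by
    intro k hk
    have hk' : k ≤ n := Nat.lt_succ_iff.mp (Finset.mem_range.mp hk)
    have e1 : (s ^ 2) ^ k = (s ^ k) ^ 2 := by ring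
    have e2 : (s ^ 2) ^ (n - k) = (s ^ (n - k)) ^ 2 := by ring
    have h2 : s ^ k * s ^ (n - k) = s ^ n := by
      rw [← pow_add]; congr 1; omega
    nlinarith [sq_nonneg (s ^ k - s ^ (n - k))]
  have hrefl : ∑ k ∈ Finset.range (n + 1), (s ^ 2) ^ (n - k)
      = ∑ k ∈ Finset.range (n + 1), (s ^ 2) ^ k := by
    have := Finset.sum_range_reflect (fun k => (s ^ 2) ^ k) (n + 1)
    simpa using this
  have h := Finset.sum_le_sum key
  rw [Finset.sum_add_distrib, hrefl, Finset.sum_const, Finset.card_range,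
    nsmul_eq_mul] at h
  push_cast at h
  linarith

lemma geom_one_le (c : ℝ) (hc : 0 ≤ c) (n : ℕ) :
    (1 : ℝ) ≤ ∑ k ∈ Finset.range (n + 1), c ^ k := by
  calc (1:ℝ) = c ^ 0 := by simp
  _ ≤ _ := Finset.single_le_sum (f := fun k => c ^ k) (fun i _ => pow_nonneg hc i) (by simp)

lemma gterm_bound (n : ℕ) (x : ℝ) : ‖gterm n x‖ ≤ 1 / (n + 1 : ℝ) ^ 2 := by
  set c : ℝ := clamp01 x with hc
  have hc0 : 0 ≤ c := clamp01_nonneg x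
  have hS1 : (1 : ℝ) ≤ ∑ k ∈ Finset.range (n + 1), c ^ k := geom_one_le c hc0 n
  have hSpos : (0:ℝ) < (∑ k ∈ Finset.range (n + 1), c ^ k) ^ 2 := by positivity
  have hg0 : 0 ≤ gterm n x := by
    unfold gterm; positivity
  rw [Real.norm_eq_abs, abs_of_nonneg hg0]
  have hsq : ((n:ℝ) + 1) ^ 2 * c ^ n ≤ (∑ k ∈ Finset.range (n + 1), c ^ k) ^ 2 := by
    set s : ℝ := Real.sqrt c with hs
    have hs0 : 0 ≤ s := Real.sqrt_nonneg _
    have hsc : s ^ 2 = c := Real.sq_sqrt hc0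
    have h1 : ((n:ℝ) + 1) * s ^ n ≤ ∑ k ∈ Finset.range (n + 1), c ^ k := by
      have := sum_sq_pow_ge s n
      rwa [hsc] at this
    have h2 : 0 ≤ ((n:ℝ) + 1) * s ^ n := by positivity
    have h3 := mul_self_le_mul_self h2 h1
    have h4 : s ^ n * s ^ n = c ^ n := by
      rw [← pow_add, ← hsc, ← pow_mul]; congr 1; omega
    nlinarith
  unfold gterm
  rw [div_le_div_iff₀ hSpos (by positivity)]
  nlinarith

/-- The kinetic-energy coefficient
`E(σ) = 2π Σ_{n≥1} σ^{2n−2}((1 − σ²)/(1 − σ^{2n}))² − π` (series indexed by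
`n = m + 1`, `m : ℕ`). -/
noncomputable def Ecoef (σ : ℝ) : ℝ :=
  2 * Real.pi * (∑' m : ℕ, σ ^ (2 * m) * ((1 - σ ^ 2) / (1 - σ ^ (2 * (m + 1)))) ^ 2)
    - Real.pi

lemma gterm_continuous (n : ℕ) : Continuous (gterm n) := by
  apply Continuous.div
  · exact (continuous_clamp01).pow n
  · exact (continuous_finset_sum _ (fun k _ => continuous_clamp01.pow k)).pow 2
  · intro x
    have := geom_one_le (clamp01 x) (clamp01_nonneg x) n
    positivity

lemma summable_bound : Summable (fun n : ℕ => 1 / ((n : ℝ) + 1) ^ 2) := by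
  have h := hasSum_zeta_two.summable
  have := (summable_nat_add_iff 1).mpr h
  simpa using this

noncomputable def Gfun (x : ℝ) : ℝ := ∑' n : ℕ, gterm n x

lemma Gfun_continuous : Continuous Gfun :=
  continuous_tsum (fun n => gterm_continuous n) summable_bound (fun n x => gterm_bound n x)

lemma Gfun_zero : Gfun 0 = 1 := by
  unfold Gfun
  rw [tsum_eq_single 0]
  · simp [gterm, clamp01]
  · intro n hn
    obtain ⟨m, rfl⟩ := Nat.exists_eq_succ_of_ne_zero hn
    simp [gterm, clamp01]

lemma Gfun_one : Gfun 1 = Real.pi ^ 2 / 6 := by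
  have hc : clamp01 1 = 1 := clamp01_eq 1 zero_le_one le_rfl
  have hterm : ∀ n : ℕ, gterm n 1 = 1 / ((n : ℝ) + 1) ^ 2 := by
    intro n
    simp [gterm, hc]
  have hsum : HasSum (fun n : ℕ => 1 / ((n : ℝ) + 1) ^ 2) (Real.pi ^ 2 / 6) := by
    have h2 : HasSum (fun n : ℕ => 1 / (((n : ℕ) + 1 : ℕ) : ℝ) ^ 2) (Real.pi ^ 2 / 6) :=
      (hasSum_nat_add_iff (f := fun n : ℕ => (1:ℝ) / (n:ℝ) ^ 2) 1).mpr
        (by simpa using hasSum_zeta_two)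
    have h0 : (fun n : ℕ => (1:ℝ) / ((n:ℝ) + 1) ^ 2)
        = fun n : ℕ => (1:ℝ) / (((n : ℕ) + 1 : ℕ):ℝ) ^ 2 := by
      funext n; push_cast; ring_nf
    rw [h0]; exact h2
  unfold Gfun
  rw [tsum_congr hterm, hsum.tsum_eq]

lemma Ecoef_eq (σ : ℝ) (hσ : σ ∈ Set.Ioo (0:ℝ) 1) :
    Ecoef σ = 2 * Real.pi * Gfun (σ ^ 2) - Real.pi := by
  obtain ⟨h0, h1⟩ := hσ
  set x : ℝ := σ ^ 2 with hx
  have hx0 : 0 < x := by positivity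
  have hx1 : x < 1 := by nlinarith
  have hcx : clamp01 x = x := clamp01_eq x hx0.le hx1.le
  unfold Ecoef Gfun
  congr 1
  congr 1
  apply tsum_congr
  intro m
  have hne : (1 : ℝ) - x ≠ 0 := by linarith
  have hgeom : 1 - x ^ (m + 1) = (∑ k ∈ Finset.range (m + 1), x ^ k) * (1 - x) := by
    have := geom_sum_mul x (m + 1)
    linarith [this]
  have hS1 : (1 : ℝ) ≤ ∑ k ∈ Finset.range (m + 1), x ^ k := geom_one_le x hx0.le m
  have hSne : (∑ k ∈ Finset.range (m + 1), x ^ k) ≠ 0 := by linarith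
  have hfrac : (1 - x) / (1 - x ^ (m + 1)) = 1 / (∑ k ∈ Finset.range (m + 1), x ^ k) := by
    rw [hgeom, div_mul_eq_div_div_swap, div_self hne]
  have hp1 : σ ^ (2 * m) = x ^ m := by rw [hx, ← pow_mul]
  have hp2 : σ ^ (2 * (m + 1)) = x ^ (m + 1) := by rw [hx, ← pow_mul]
  have hp3 : σ ^ 2 = x := rfl
  rw [hp1, hp2, hp3, hfrac, gterm, hcx]
  rw [div_pow, one_pow, mul_one_div]

/-- `E` is continuous on `(0,1)`, `E(σ) → π` as `σ → 0⁺`, and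
`E(σ) → π³/3 − π` as `σ → 1⁻`. -/
theorem stmt_18 :
    ContinuousOn Ecoef (Set.Ioo 0 1) ∧
    Filter.Tendsto Ecoef (nhdsWithin 0 (Set.Ioo 0 1)) (nhds Real.pi) ∧
    Filter.Tendsto Ecoef (nhdsWithin 1 (Set.Ioo 0 1))
      (nhds (Real.pi ^ 3 / 3 - Real.pi)) := by
  set H : ℝ → ℝ := fun σ => 2 * Real.pi * Gfun (σ ^ 2) - Real.pi with hHdef
  have hEq : Set.EqOn Ecoef H (Set.Ioo 0 1) := fun σ hσ => Ecoef_eq σ hσ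
  have hH : Continuous H :=
    (continuous_const.mul (Gfun_continuous.comp (continuous_pow 2))).sub continuous_const
  have hEv0 : H =ᶠ[nhdsWithin 0 (Set.Ioo 0 1)] Ecoef :=
    (Filter.eventuallyEq_of_mem self_mem_nhdsWithin hEq).symm
  have hEv1 : H =ᶠ[nhdsWithin 1 (Set.Ioo 0 1)] Ecoef :=
    (Filter.eventuallyEq_of_mem self_mem_nhdsWithin hEq).symm
  refine ⟨hH.continuousOn.congr hEq, ?_, ?_⟩
  · have h0 : Filter.Tendsto H (nhdsWithin 0 (Set.Ioo 0 1)) (nhds (H 0)) :=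
      (hH.tendsto 0).mono_left nhdsWithin_le_nhds
    have hv : H 0 = Real.pi := by
      simp only [hHdef]
      norm_num [Gfun_zero]
      ring
    exact (hv ▸ h0).congr' hEv0
  · have h1 : Filter.Tendsto H (nhdsWithin 1 (Set.Ioo 0 1)) (nhds (H 1)) :=
      (hH.tendsto 1).mono_left nhdsWithin_le_nhds
    have hv : H 1 = Real.pi ^ 3 / 3 - Real.pi := by
      simp only [hHdef]
      norm_num [Gfun_one]
      ring
    exact (hv ▸ h1).congr' hEv1
end
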